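/- arXiv:2207.01035 — 5 statements merged into one kernel-verified Lean document; each statement's English description precedes it below -/
import Mathlib

section
/- Let G₊ be obtained from the directed graph G by inserting a new edge (a,b), and let v, w be vertices with a path from v to w in G. Let D = sd_G(v,a) + 1 + sd_G(b,w) if G contains a path from v to a and a path from b to w, and D = ∞ otherwise. Then: (1) if D > sd_G(v,w), then sd_{G₊}(v,w) = sd_G(v,w) and SPCnt_{G₊}(v,w) = SPCnt_G(v,w); (2) if D = sd_G(v,w), then sd_{G₊}(v,w) = sd_G(v,w) and SPCnt_{G₊}(v,w) = SPCnt_G(v,w) + SPCnt_G(v,a) · SPCnt_G(b,w); (3) if D < sd_G(v,w), then sd_{G₊}(v,w) = D and SPCnt_{G₊}(v,w) = SPCnt_G(v,a) · SPCnt_G(b,w). -/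
open Classical

/-- `p` is a path from `s` to `t` in the directed graph with edge relation `E`:
`p` is the list of visited vertices, starting at `s`, ending at `t`, and every
consecutive pair of vertices is an edge. -/
def IsWalk {V : Type*} (E : V → V → Prop) (s t : V) (p : List V) : Prop :=
  p.Chain' E ∧ p.head? = some s ∧ p.getLast? = some t

/-- The length of a path given by its vertex list `p`, i.e. its number of edges. -/
def walkLen {V : Type*} (p : List V) : ℕ := p.length - 1

/-- A path from `s` to `t` exists. -/
def Reach {V : Type*} (E : V → V → Prop) (s t : V) : Prop := ∃ p, IsWalk E s t p

/-- The shortest distance from `s` to `t`: the minimum length of a path from `s` to `t`. -/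
noncomputable def sd {V : Type*} (E : V → V → Prop) (s t : V) : ℕ :=
  sInf {n | ∃ p, IsWalk E s t p ∧ walkLen p = n}

/-- The set of shortest paths from `s` to `t`. -/
noncomputable def ShortestPaths {V : Type*} (E : V → V → Prop) (s t : V) : Set (List V) :=
  {p | IsWalk E s t p ∧ walkLen p = sd E s t}

/-- The number of shortest paths from `s` to `t`. -/
noncomputable def SPCnt {V : Type*} (E : V → V → Prop) (s t : V) : ℕ :=
  (ShortestPaths E s t).ncard

/-- The path `p` traverses the edge `(a, b)`: some consecutive pair of its vertices is `(a, b)`. -/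
def Traverses {V : Type*} (p : List V) (a b : V) : Prop := (a, b) ∈ p.zip p.tail

section Aux

variable {V : Type*}

lemma walk_ne_nil {E : V → V → Prop} {s t : V} {p : List V} (h : IsWalk E s t p) : p ≠ [] := by
  rcases h with ⟨-, h2, -⟩
  intro hn; subst hn; simp at h2

lemma walkLen_length {p : List V} (hne : p ≠ []) : p.length = walkLen p + 1 := by
  unfold walkLen
  have : 1 ≤ p.length := List.length_pos_iff.mpr hne
  omega

lemma walk_mono {E E' : V → V → Prop} (hmono : ∀ x y, E x y → E' x y) {s t : V} {p : List V}
    (h : IsWalk E s t p) : IsWalk E' s t p :=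
  ⟨h.1.imp (fun x y => hmono x y), h.2⟩

lemma sd_le_walk {E : V → V → Prop} {s t : V} {p : List V} (h : IsWalk E s t p) :
    sd E s t ≤ walkLen p :=
  Nat.sInf_le ⟨p, h, rfl⟩

lemma exists_min_walk {E : V → V → Prop} {s t : V} (h : Reach E s t) :
    ∃ p, IsWalk E s t p ∧ walkLen p = sd E s t := by
  obtain ⟨p, hp⟩ := h
  have hne : {n | ∃ q, IsWalk E s t q ∧ walkLen q = n}.Nonempty := ⟨walkLen p, p, hp, rfl⟩
  exact Nat.sInf_mem hne

lemma mem_zip_tail {p : List V} {a b : V} (h : (a, b) ∈ p.zip p.tail) :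
    ∃ l1 l2, p = l1 ++ a :: b :: l2 := by
  induction p with
  | nil => simp at h
  | cons x xs ih =>
    cases xs with
    | nil => simp at h
    | cons y ys =>
      rw [show (x :: y :: ys).tail = y :: ys from rfl, List.zip_cons_cons,
        List.mem_cons] at h
      rcases h with h | h
      · obtain ⟨rfl, rfl⟩ : a = x ∧ b = y := by simpa [Prod.ext_iff] using h
        exact ⟨[], ys, rfl⟩
      · obtain ⟨l1, l2, heq⟩ := ih h
        exact ⟨x :: l1, l2, by rw [List.cons_append, ← heq]⟩

lemma traverses_decomp {l1 l2 : List V} {a b : V} :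
    Traverses (l1 ++ a :: b :: l2) a b := by
  unfold Traverses
  induction l1 with
  | nil => simp [List.zip_cons_cons]
  | cons x xs ih =>
    obtain ⟨h', t', hq⟩ : ∃ h' t', xs ++ a :: b :: l2 = h' :: t' := by
      cases xs with
      | nil => exact ⟨a, b :: l2, rfl⟩
      | cons z zs => exact ⟨z, zs ++ a :: b :: l2, rfl⟩
    show (a, b) ∈ (x :: (xs ++ a :: b :: l2)).zip (x :: (xs ++ a :: b :: l2)).tail
    rw [hq] at ih ⊢
    rw [show (x :: (h' :: t')).tail = h' :: t' from rfl, List.zip_cons_cons, List.mem_cons]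
    right
    exact ih

lemma walk_append {E : V → V → Prop} {s t a b : V} {p q : List V}
    (hp : IsWalk E s a p) (hq : IsWalk E b t q) (hab : E a b) :
    IsWalk E s t (p ++ q) ∧ walkLen (p ++ q) = walkLen p + 1 + walkLen q := by
  have hpne := walk_ne_nil hp
  have hqne := walk_ne_nil hq
  constructor
  · refine ⟨List.isChain_append.mpr ⟨hp.1, hq.1, ?_⟩, ?_, ?_⟩
    · intro x hx y hy
      rw [hp.2.2] at hx; rw [hq.2.1] at hy
      simp only [Option.mem_def, Option.some_inj] at hx hy
      rw [hx, hy] at hab; exact hab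
    · rw [List.head?_append_of_ne_nil _ hpne]; exact hp.2.1
    · rw [List.getLast?_append_of_ne_nil _ hqne]; exact hq.2.2
  · have h1 := walkLen_length hpne
    have h2 := walkLen_length hqne
    unfold walkLen at *
    rw [List.length_append]
    omega

lemma walk_split {E : V → V → Prop} {s t a b : V} {l1 l2 : List V}
    (h : IsWalk E s t (l1 ++ a :: b :: l2)) :
    IsWalk E s a (l1 ++ [a]) ∧ IsWalk E b t (b :: l2) ∧
      walkLen (l1 ++ a :: b :: l2) = walkLen (l1 ++ [a]) + 1 + walkLen (b :: l2) := by
  have hre : l1 ++ a :: b :: l2 = (l1 ++ [a]) ++ (b :: l2) := by simp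
  rw [hre] at h
  obtain ⟨hc, hh, hl⟩ := h
  replace hc := List.isChain_append.mp hc
  refine ⟨⟨hc.1, ?_, List.getLast?_concat⟩, ⟨hc.2.1, rfl, ?_⟩, ?_⟩
  · rw [List.head?_append_of_ne_nil _ (by simp)] at hh; exact hh
  · rw [List.getLast?_append_of_ne_nil _ (by simp)] at hl; exact hl
  · unfold walkLen; simp [List.length_append]; omega

lemma chain'_cases {E : V → V → Prop} {a b : V} {p : List V}
    (h : p.Chain' (fun x y => E x y ∨ (x = a ∧ y = b))) :
    p.Chain' E ∨ Traverses p a b := by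
  induction p with
  | nil => left; exact List.isChain_nil
  | cons x xs ih =>
    cases xs with
    | nil => left; exact List.isChain_singleton _
    | cons y ys =>
      replace h := List.isChain_cons_cons.mp h
      rcases ih h.2 with hc | ht
      · rcases h.1 with he | ⟨rfl, rfl⟩
        · left; exact List.isChain_cons_cons.mpr ⟨he, hc⟩
        · right; exact traverses_decomp (l1 := []) (l2 := ys)
      · right
        unfold Traverses at ht ⊢
        rw [show (x :: y :: ys).tail = y :: ys from rfl, List.zip_cons_cons, List.mem_cons]
        right; exact ht

/-- A shortest walk to `a` in the augmented graph avoids the new edge `(a,b)`. -/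
lemma reach_a {E : V → V → Prop} {a b v : V}
    (h : Reach (fun x y => E x y ∨ (x = a ∧ y = b)) v a) :
    Reach E v a ∧ sd (fun x y => E x y ∨ (x = a ∧ y = b)) v a = sd E v a ∧
      ShortestPaths (fun x y => E x y ∨ (x = a ∧ y = b)) v a = ShortestPaths E v a := by
  set Ep := fun x y => E x y ∨ (x = a ∧ y = b) with hEp
  have claim : ∀ p, IsWalk Ep v a p → walkLen p = sd Ep v a → p.Chain' E := by
    intro p hp hlen
    rcases chain'_cases hp.1 with hc | ht
    · exact hc
    · exfalso
      obtain ⟨l1, l2, rfl⟩ := mem_zip_tail ht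
      obtain ⟨hq1, hq2, hlen'⟩ := walk_split hp
      have h1 : sd Ep v a ≤ walkLen (l1 ++ [a]) := sd_le_walk hq1
      omega
  obtain ⟨p0, hp0, hlen0⟩ := exists_min_walk h
  have hc0 : p0.Chain' E := claim p0 hp0 hlen0
  have hreach : Reach E v a := ⟨p0, hc0, hp0.2⟩
  have hle : sd Ep v a ≤ sd E v a := by
    obtain ⟨q, hq, hlq⟩ := exists_min_walk hreach
    rw [← hlq]
    exact sd_le_walk (walk_mono (fun x y h => Or.inl h) hq)
  have hge : sd E v a ≤ sd Ep v a := by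
    rw [← hlen0]; exact sd_le_walk ⟨hc0, hp0.2⟩
  have hsd : sd Ep v a = sd E v a := le_antisymm hle hge
  refine ⟨hreach, hsd, ?_⟩
  ext p
  constructor
  · rintro ⟨hp, hlp⟩
    exact ⟨⟨claim p hp hlp, hp.2⟩, by rw [hlp, hsd]⟩
  · rintro ⟨hp, hlp⟩
    exact ⟨walk_mono (fun x y h => Or.inl h) hp, by rw [hlp, hsd]⟩

/-- A shortest walk from `b` in the augmented graph avoids the new edge `(a,b)`. -/
lemma reach_b {E : V → V → Prop} {a b w : V}
    (h : Reach (fun x y => E x y ∨ (x = a ∧ y = b)) b w) :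
    Reach E b w ∧ sd (fun x y => E x y ∨ (x = a ∧ y = b)) b w = sd E b w ∧
      ShortestPaths (fun x y => E x y ∨ (x = a ∧ y = b)) b w = ShortestPaths E b w := by
  set Ep := fun x y => E x y ∨ (x = a ∧ y = b) with hEp
  have claim : ∀ p, IsWalk Ep b w p → walkLen p = sd Ep b w → p.Chain' E := by
    intro p hp hlen
    rcases chain'_cases hp.1 with hc | ht
    · exact hc
    · exfalso
      obtain ⟨l1, l2, rfl⟩ := mem_zip_tail ht
      obtain ⟨hq1, hq2, hlen'⟩ := walk_split hp
      have h2 : sd Ep b w ≤ walkLen (b :: l2) := sd_le_walk hq2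
      have h3 : walkLen (l1 ++ [a]) + 1 ≥ 1 := by omega
      omega
  obtain ⟨p0, hp0, hlen0⟩ := exists_min_walk h
  have hc0 : p0.Chain' E := claim p0 hp0 hlen0
  have hreach : Reach E b w := ⟨p0, hc0, hp0.2⟩
  have hle : sd Ep b w ≤ sd E b w := by
    obtain ⟨q, hq, hlq⟩ := exists_min_walk hreach
    rw [← hlq]
    exact sd_le_walk (walk_mono (fun x y h => Or.inl h) hq)
  have hge : sd E b w ≤ sd Ep b w := by
    rw [← hlen0]; exact sd_le_walk ⟨hc0, hp0.2⟩
  have hsd : sd Ep b w = sd E b w := le_antisymm hle hge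
  refine ⟨hreach, hsd, ?_⟩
  ext p
  constructor
  · rintro ⟨hp, hlp⟩
    exact ⟨⟨claim p hp hlp, hp.2⟩, by rw [hlp, hsd]⟩
  · rintro ⟨hp, hlp⟩
    exact ⟨walk_mono (fun x y h => Or.inl h) hp, by rw [hlp, hsd]⟩

lemma sp_finite [Finite V] (E : V → V → Prop) (s t : V) : (ShortestPaths E s t).Finite := by
  apply (List.finite_length_eq V (sd E s t + 1)).subset
  rintro p ⟨hp, hlen⟩
  simp only [Set.mem_setOf_eq]
  rw [walkLen_length (walk_ne_nil hp), hlen]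

lemma ncard_concat_image {m : ℕ} (S1 S2 : Set (List V)) (hlen : ∀ q ∈ S1, q.length = m) :
    ((fun q : List V × List V => q.1 ++ q.2) '' (S1 ×ˢ S2)).ncard = S1.ncard * S2.ncard := by
  rw [Set.ncard_image_of_injOn, ← Nat.card_coe_set_eq,
    Nat.card_congr (Equiv.Set.prod S1 S2), Nat.card_prod, Nat.card_coe_set_eq,
    Nat.card_coe_set_eq]
  rintro ⟨p1, p2⟩ hp ⟨q1, q2⟩ hq heq
  rw [Set.mem_prod] at hp hq
  simp only at heq
  obtain ⟨h1, h2⟩ := List.append_inj heq (by rw [hlen p1 hp.1, hlen q1 hq.1])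
  simp [Prod.ext_iff, h1, h2]

end Aux

/-- The three update cases for shortest distance and shortest-path count between
`v` and `w` after inserting a new edge `(a, b)`, where
`D = sd(v,a) + 1 + sd(b,w)` if `v` reaches `a` and `b` reaches `w`, and `D = ∞` otherwise. -/
theorem stmt_5 {V : Type*} [Fintype V] (E : V → V → Prop) (hE : ∀ v, ¬ E v v)
    (a b : V) (hab : a ≠ b) (hnew : ¬ E a b)
    (Ep : V → V → Prop) (hEp : Ep = fun x y => E x y ∨ (x = a ∧ y = b))
    (v w : V) (hvw : Reach E v w) (D : ℕ∞)
    (hD : D = if Reach E v a ∧ Reach E b w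
      then ((sd E v a + 1 + sd E b w : ℕ) : ℕ∞) else ⊤) :
    ((sd E v w : ℕ∞) < D →
      sd Ep v w = sd E v w ∧ SPCnt Ep v w = SPCnt E v w) ∧
    (D = (sd E v w : ℕ∞) →
      sd Ep v w = sd E v w ∧
      SPCnt Ep v w = SPCnt E v w + SPCnt E v a * SPCnt E b w) ∧
    (D < (sd E v w : ℕ∞) →
      (sd Ep v w : ℕ∞) = D ∧ SPCnt Ep v w = SPCnt E v a * SPCnt E b w) := by
  subst hEp
  set Ep := fun x y => E x y ∨ (x = a ∧ y = b) with hEpdef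
  have hmono : ∀ x y, E x y → Ep x y := fun x y h => Or.inl h
  have hedge : Ep a b := Or.inr ⟨rfl, rfl⟩
  have hReachP : Reach Ep v w := by
    obtain ⟨p, hp⟩ := hvw; exact ⟨p, walk_mono hmono hp⟩
  have hle : sd Ep v w ≤ sd E v w := by
    obtain ⟨q, hq, hlq⟩ := exists_min_walk hvw
    rw [← hlq]; exact sd_le_walk (walk_mono hmono hq)
  -- concatenation of shortest pieces
  have hconcat : ∀ q1 q2, q1 ∈ ShortestPaths E v a → q2 ∈ ShortestPaths E b w →
      IsWalk Ep v w (q1 ++ q2) ∧ walkLen (q1 ++ q2) = sd E v a + 1 + sd E b w := by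
    rintro q1 q2 ⟨hq1, hl1⟩ ⟨hq2, hl2⟩
    obtain ⟨hw, hl⟩ := walk_append (walk_mono hmono hq1) (walk_mono hmono hq2) hedge
    exact ⟨hw, by rw [hl, hl1, hl2]⟩
  have hDle : Reach E v a → Reach E b w → sd Ep v w ≤ sd E v a + 1 + sd E b w := by
    intro h1 h2
    obtain ⟨q1, hq1⟩ := exists_min_walk h1
    obtain ⟨q2, hq2⟩ := exists_min_walk h2
    obtain ⟨hw, hl⟩ := hconcat q1 q2 hq1 hq2
    rw [← hl]; exact sd_le_walk hw
  -- classification of shortest Ep-walks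
  have classify : ∀ p, IsWalk Ep v w p → walkLen p = sd Ep v w →
      IsWalk E v w p ∨
      (Reach E v a ∧ Reach E b w ∧ sd Ep v w = sd E v a + 1 + sd E b w ∧
        ∃ q1 q2, p = q1 ++ q2 ∧ q1 ∈ ShortestPaths E v a ∧ q2 ∈ ShortestPaths E b w ∧
          ¬ p.Chain' E) := by
    intro p hp hlen
    rcases chain'_cases hp.1 with hc | ht
    · exact Or.inl ⟨hc, hp.2⟩
    · right
      obtain ⟨l1, l2, rfl⟩ := mem_zip_tail ht
      obtain ⟨hq1, hq2, hlen'⟩ := walk_split hp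
      obtain ⟨hRa, hsda, hSPa⟩ := reach_a ⟨_, hq1⟩
      obtain ⟨hRb, hsdb, hSPb⟩ := reach_b ⟨_, hq2⟩
      have h1 : sd E v a ≤ walkLen (l1 ++ [a]) := by rw [← hsda]; exact sd_le_walk hq1
      have h2 : sd E b w ≤ walkLen (b :: l2) := by rw [← hsdb]; exact sd_le_walk hq2
      have h3 := hDle hRa hRb
      have heq1 : walkLen (l1 ++ [a]) = sd E v a := by omega
      have heq2 : walkLen (b :: l2) = sd E b w := by omega
      have hsdeq : sd Ep v w = sd E v a + 1 + sd E b w := by omega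
      refine ⟨hRa, hRb, hsdeq, l1 ++ [a], b :: l2, by simp, ?_, ?_, ?_⟩
      · rw [← hSPa]; exact ⟨hq1, by rw [heq1, hsda]⟩
      · rw [← hSPb]; exact ⟨hq2, by rw [heq2, hsdb]⟩
      · intro hc
        have : (a :: b :: l2).Chain' E := (List.isChain_append.mp hc).2.1
        exact hnew (List.isChain_cons_cons.mp this).1
  -- image set membership: concatenations are in ShortestPaths Ep when lengths work out
  have himg : ∀ (hsd : sd Ep v w = sd E v a + 1 + sd E b w) (p : List V),
      p ∈ (fun q : List V × List V => q.1 ++ q.2) '' (ShortestPaths E v a ×ˢ ShortestPaths E b w) →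
      p ∈ ShortestPaths Ep v w := by
    rintro hsd p ⟨⟨q1, q2⟩, hmem, rfl⟩
    rw [Set.mem_prod] at hmem
    obtain ⟨hw, hl⟩ := hconcat q1 q2 hmem.1 hmem.2
    exact ⟨hw, by rw [hl, hsd]⟩
  -- elements of the image are not E-chains
  have himgnc : ∀ p ∈ (fun q : List V × List V => q.1 ++ q.2) ''
      (ShortestPaths E v a ×ˢ ShortestPaths E b w), ¬ p.Chain' E := by
    rintro p ⟨⟨q1, q2⟩, hmem, rfl⟩ hc
    rw [Set.mem_prod] at hmem
    obtain ⟨⟨hq1, -⟩, ⟨hq2, -⟩⟩ := hmem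
    have := (List.isChain_append.mp hc).2.2
    have hab' : E a b := by
      apply this a _ b
      · rw [hq2.2.1]; rfl
      · rw [hq1.2.2]; rfl
    exact hnew hab'
  have hlenS1 : ∀ q ∈ ShortestPaths E v a, q.length = sd E v a + 1 := by
    rintro q ⟨hq, hl⟩
    rw [walkLen_length (walk_ne_nil hq), hl]
  have hprodcard : ((fun q : List V × List V => q.1 ++ q.2) ''
      (ShortestPaths E v a ×ˢ ShortestPaths E b w)).ncard = SPCnt E v a * SPCnt E b w :=
    ncard_concat_image _ _ hlenS1
  have hfinimg : ((fun q : List V × List V => q.1 ++ q.2) ''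
      (ShortestPaths E v a ×ˢ ShortestPaths E b w)).Finite :=
    ((sp_finite E v a).prod (sp_finite E b w)).image _
  refine ⟨?_, ?_, ?_⟩
  · -- case D > sd E v w
    intro h1
    have hR' : Reach E v a → Reach E b w → sd E v w < sd E v a + 1 + sd E b w := by
      intro ha hb
      rw [hD, if_pos ⟨ha, hb⟩, Nat.cast_lt] at h1
      exact h1
    have hsdeq : sd Ep v w = sd E v w := by
      refine le_antisymm hle ?_
      obtain ⟨p0, hp0, hl0⟩ := exists_min_walk hReachP
      rcases classify p0 hp0 hl0 with hw | ⟨hRa, hRb, hsd', -⟩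
      · rw [← hl0]; exact sd_le_walk hw
      · have := hR' hRa hRb; omega
    refine ⟨hsdeq, ?_⟩
    unfold SPCnt
    congr 1
    ext p
    constructor
    · rintro ⟨hp, hl⟩
      rcases classify p hp hl with hw | ⟨hRa, hRb, hsd', -⟩
      · exact ⟨hw, by rw [hl, hsdeq]⟩
      · exfalso; have := hR' hRa hRb; omega
    · rintro ⟨hp, hl⟩
      exact ⟨walk_mono hmono hp, by rw [hl, ← hsdeq]⟩
  · -- case D = sd E v w
    intro h2
    have hR : Reach E v a ∧ Reach E b w := by
      by_contra hnR
      rw [hD, if_neg hnR] at h2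
      exact (ENat.coe_ne_top _) h2.symm
    rw [hD, if_pos hR, Nat.cast_inj] at h2
    have hsdeq : sd Ep v w = sd E v w := by
      refine le_antisymm hle ?_
      obtain ⟨p0, hp0, hl0⟩ := exists_min_walk hReachP
      rcases classify p0 hp0 hl0 with hw | ⟨-, -, hsd', -⟩
      · rw [← hl0]; exact sd_le_walk hw
      · omega
    refine ⟨hsdeq, ?_⟩
    have hset : ShortestPaths Ep v w = ShortestPaths E v w ∪
        ((fun q : List V × List V => q.1 ++ q.2) ''
          (ShortestPaths E v a ×ˢ ShortestPaths E b w)) := by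
      ext p
      constructor
      · rintro ⟨hp, hl⟩
        rcases classify p hp hl with hw | ⟨-, -, -, q1, q2, rfl, hq1, hq2, -⟩
        · exact Or.inl ⟨hw, by rw [hl, hsdeq]⟩
        · exact Or.inr ⟨(q1, q2), Set.mem_prod.mpr ⟨hq1, hq2⟩, rfl⟩
      · rintro (⟨hp, hl⟩ | hmem)
        · exact ⟨walk_mono hmono hp, by rw [hl, ← hsdeq]⟩
        · exact himg (by omega) p hmem
    have hdisj : Disjoint (ShortestPaths E v w)
        ((fun q : List V × List V => q.1 ++ q.2) ''
          (ShortestPaths E v a ×ˢ ShortestPaths E b w)) := by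
      rw [Set.disjoint_left]
      rintro p ⟨hp, -⟩ hmem
      exact himgnc p hmem hp.1
    unfold SPCnt
    rw [hset, Set.ncard_union_eq hdisj (sp_finite E v w) hfinimg, hprodcard]; rfl
  · -- case D < sd E v w
    intro h3
    have hR : Reach E v a ∧ Reach E b w := by
      by_contra hnR
      rw [hD, if_neg hnR] at h3
      exact (not_top_lt) h3
    rw [hD, if_pos hR, Nat.cast_lt] at h3
    have hsdn : sd Ep v w = sd E v a + 1 + sd E b w := by
      refine le_antisymm (hDle hR.1 hR.2) ?_
      obtain ⟨p0, hp0, hl0⟩ := exists_min_walk hReachP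
      rcases classify p0 hp0 hl0 with hw | ⟨-, -, hsd', -⟩
      · exfalso
        have : sd E v w ≤ walkLen p0 := sd_le_walk hw
        have := hDle hR.1 hR.2
        omega
      · omega
    refine ⟨by rw [hD, if_pos hR, hsdn], ?_⟩
    have hset : ShortestPaths Ep v w =
        ((fun q : List V × List V => q.1 ++ q.2) ''
          (ShortestPaths E v a ×ˢ ShortestPaths E b w)) := by
      ext p
      constructor
      · rintro ⟨hp, hl⟩
        rcases classify p hp hl with hw | ⟨-, -, -, q1, q2, rfl, hq1, hq2, -⟩
        · exfalso
          have : sd E v w ≤ walkLen p := sd_le_walk hw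
          omega
        · exact ⟨(q1, q2), Set.mem_prod.mpr ⟨hq1, hq2⟩, rfl⟩
      · exact himg hsdn p
    unfold SPCnt
    rw [hset, hprodcard]; rfl
end

section
/- Let G₋ be obtained from the directed graph G by deleting an edge (a,b) ∈ E, and let v, w be vertices with a path from v to w in G. If G contains no path from v to a, or no path from b to w, or sd_G(v,a) + 1 + sd_G(b,w) > sd_G(v,w), then a path from v to w still exists in G₋, sd_{G₋}(v,w) = sd_G(v,w), and SPCnt_{G₋}(v,w) = SPCnt_G(v,w). That is, pairs for which no shortest path travels via (a,b) are unaffected by the deletion. -/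
open Classical

lemma walk_split_s7 {V : Type*} (E : V → V → Prop) (a b : V) :
    ∀ (p : List V) (v w : V), IsWalk E v w p → Traverses p a b →
      ∃ p1 p2, IsWalk E v a p1 ∧ IsWalk E b w p2 ∧
        walkLen p1 + 1 + walkLen p2 = walkLen p := by
  intro p
  induction p with
  | nil => intro v w h ht; simp [Traverses] at ht
  | cons x q ih =>
    intro v w h ht
    obtain ⟨hc, hh, hl⟩ := h
    simp only [List.head?_cons, Option.some.injEq] at hh
    subst hh
    match q with
    | [] => simp [Traverses] at ht
    | y :: r =>
      simp only [Traverses, List.tail_cons, List.zip_cons_cons, List.mem_cons,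
        Prod.mk.injEq] at ht
      rcases ht with ⟨ha, hb⟩ | ht
      · -- (a,b) = (x,y)
        subst ha; subst hb
        refine ⟨[a], b :: r, ?_, ?_, ?_⟩
        · exact ⟨List.isChain_singleton a, rfl, rfl⟩
        · exact ⟨(List.isChain_cons_cons.mp hc).2, rfl, by
            rw [← hl, List.getLast?_cons_cons]⟩
        · simp [walkLen]; omega
      · -- recurse on y :: r
        have hw' : IsWalk E y w (y :: r) :=
          ⟨(List.isChain_cons_cons.mp hc).2, rfl, by rw [← hl, List.getLast?_cons_cons]⟩
        obtain ⟨p1, p2, hw1, hw2, hlen⟩ := ih y w hw' ht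
        obtain ⟨hc1, hh1, hl1⟩ := hw1
        match p1 with
        | [] => simp at hh1
        | z :: s =>
          simp only [List.head?_cons, Option.some.injEq] at hh1
          subst hh1
          refine ⟨x :: z :: s, p2, ⟨?_, rfl, ?_⟩, hw2, ?_⟩
          · exact List.isChain_cons_cons.mpr ⟨(List.isChain_cons_cons.mp hc).1, hc1⟩
          · rw [List.getLast?_cons_cons]; exact hl1
          · simp only [walkLen, List.length_cons] at hlen ⊢
            omega

lemma chain'_Em {V : Type*} (E Em : V → V → Prop) (a b : V)
    (hEm : Em = fun x y => E x y ∧ ¬ (x = a ∧ y = b)) :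
    ∀ p : List V, p.Chain' E → ¬ Traverses p a b → p.Chain' Em := by
  intro p
  induction p with
  | nil => intro _ _; exact List.isChain_nil
  | cons x q ih =>
    intro hc ht
    match q with
    | [] => exact List.isChain_singleton x
    | y :: r =>
      simp only [Traverses, List.tail_cons, List.zip_cons_cons, List.mem_cons,
        Prod.mk.injEq, not_or] at ht
      obtain ⟨hne, ht'⟩ := ht
      refine List.isChain_cons_cons.mpr ⟨?_, ih (List.isChain_cons_cons.mp hc).2 ht'⟩
      subst hEm
      exact ⟨(List.isChain_cons_cons.mp hc).1, fun ⟨h1, h2⟩ => hne ⟨h1.symm, h2.symm⟩⟩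

/-- Pairs `(v, w)` for which no shortest path travels via the deleted edge `(a, b)`
are unaffected by the deletion: reachability, shortest distance and shortest-path
count are preserved. -/
theorem stmt_7 {V : Type*} [Fintype V] (E : V → V → Prop) (hE : ∀ v, ¬ E v v)
    (a b : V) (hab : E a b)
    (Em : V → V → Prop) (hEm : Em = fun x y => E x y ∧ ¬ (x = a ∧ y = b))
    (v w : V) (hvw : Reach E v w)
    (hcond : ¬ Reach E v a ∨ ¬ Reach E b w ∨ sd E v w < sd E v a + 1 + sd E b w) :
    Reach Em v w ∧ sd Em v w = sd E v w ∧ SPCnt Em v w = SPCnt E v w := by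
  have hImp : ∀ x y, Em x y → E x y := by subst hEm; exact fun x y h => h.1
  -- key: no shortest E-path traverses (a,b)
  have hkey : ∀ p, IsWalk E v w p → walkLen p = sd E v w → ¬ Traverses p a b := by
    intro p hp hlen ht
    obtain ⟨p1, p2, hw1, hw2, hsum⟩ := walk_split_s7 E a b p v w hp ht
    rcases hcond with h | h | h
    · exact h ⟨p1, hw1⟩
    · exact h ⟨p2, hw2⟩
    · have h1 : sd E v a ≤ walkLen p1 := Nat.sInf_le ⟨p1, hw1, rfl⟩
      have h2 : sd E b w ≤ walkLen p2 := Nat.sInf_le ⟨p2, hw2, rfl⟩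
      omega
  -- walks in Em are walks in E
  have hEmWalk : ∀ s t p, IsWalk Em s t p → IsWalk E s t p := by
    intro s t p ⟨hc, hh, hl⟩
    exact ⟨hc.imp (fun {x y} => hImp x y), hh, hl⟩
  -- a shortest E-path exists
  obtain ⟨q0, hq0⟩ := hvw
  have hne : {n | ∃ p, IsWalk E v w p ∧ walkLen p = n}.Nonempty :=
    ⟨walkLen q0, q0, hq0, rfl⟩
  obtain ⟨p0, hp0, hp0len⟩ := Nat.sInf_mem hne
  -- p0 is an Em-walk
  have hp0Em : IsWalk Em v w p0 :=
    ⟨chain'_Em E Em a b hEm p0 hp0.1 (hkey p0 hp0 hp0len), hp0.2.1, hp0.2.2⟩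
  have hreach : Reach Em v w := ⟨p0, hp0Em⟩
  have hle1 : sd Em v w ≤ sd E v w := Nat.sInf_le ⟨p0, hp0Em, hp0len⟩
  have hneEm : {n | ∃ p, IsWalk Em v w p ∧ walkLen p = n}.Nonempty :=
    ⟨walkLen p0, p0, hp0Em, rfl⟩
  obtain ⟨q1, hq1, hq1len⟩ := Nat.sInf_mem hneEm
  have hle2 : sd E v w ≤ sd Em v w := Nat.sInf_le ⟨q1, hEmWalk v w q1 hq1, hq1len⟩
  have hsd : sd Em v w = sd E v w := le_antisymm hle1 hle2
  refine ⟨hreach, hsd, ?_⟩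
  have hset : ShortestPaths Em v w = ShortestPaths E v w := by
    ext p
    constructor
    · rintro ⟨hw, hlen⟩
      exact ⟨hEmWalk v w p hw, by rw [hlen, hsd]⟩
    · rintro ⟨hw, hlen⟩
      refine ⟨⟨chain'_Em E Em a b hEm p hw.1 (hkey p hw hlen), hw.2.1, hw.2.2⟩, ?_⟩
      rw [hlen, hsd]
  unfold SPCnt
  rw [hset]
end

section
/- Let G₋ be obtained from the directed graph G by deleting an edge (a,b) ∈ E, and let v, w be vertices such that G contains paths from v to w, from v to a, and from b to w, with sd_G(v,a) + 1 + sd_G(b,w) = sd_G(v,w). If SPCnt_G(v,w) > SPCnt_G(v,a) · SPCnt_G(b,w), then a path from v to w exists in G₋, sd_{G₋}(v,w) = sd_G(v,w), and SPCnt_{G₋}(v,w) = SPCnt_G(v,w) − SPCnt_G(v,a) · SPCnt_G(b,w). -/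
open Classical

section Aux

variable {V : Type*} {E : V → V → Prop} {s t a b : V}

lemma IsWalk.ne_nil {p : List V} (h : IsWalk E s t p) : p ≠ [] := by
  rintro rfl; simp [IsWalk] at h

lemma IsWalk.length_eq {p : List V} (h : IsWalk E s t p) : p.length = walkLen p + 1 := by
  have h1 : 0 < p.length := List.length_pos_iff.2 h.ne_nil
  unfold walkLen; omega

lemma walkSet_finite [Finite V] (E : V → V → Prop) (s t : V) (n : ℕ) :
    {p : List V | IsWalk E s t p ∧ walkLen p = n}.Finite :=
  (List.finite_length_eq V (n + 1)).subset (fun p ⟨h1, h2⟩ => by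
    simp only [Set.mem_setOf_eq]; rw [h1.length_eq, h2])

lemma sd_le {p : List V} (h : IsWalk E s t p) : sd E s t ≤ walkLen p :=
  Nat.sInf_le ⟨p, h, rfl⟩

lemma exists_shortest (h : Reach E s t) : ∃ p, IsWalk E s t p ∧ walkLen p = sd E s t := by
  obtain ⟨p, hp⟩ := h
  exact Nat.sInf_mem (⟨walkLen p, p, hp, rfl⟩ : Set.Nonempty {n | ∃ p, IsWalk E s t p ∧ walkLen p = n})

lemma traverses_cons_cons {x y : V} {l : List V} :
    Traverses (x :: y :: l) a b ↔ (x = a ∧ y = b) ∨ Traverses (y :: l) a b := by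
  simp only [Traverses, List.tail_cons, List.zip_cons_cons, List.mem_cons, Prod.mk.injEq]
  tauto

lemma traverses_iff {p : List V} :
    Traverses p a b ↔ ∃ q r, p = q ++ a :: b :: r := by
  induction p with
  | nil =>
    simp only [Traverses, List.zip_nil_left, List.not_mem_nil, false_iff]
    rintro ⟨q, r, hqr⟩; exact (List.append_ne_nil_of_right_ne_nil q (by simp)) hqr.symm
  | cons x tl ih =>
    cases tl with
    | nil =>
      simp only [Traverses, List.tail_cons, List.zip_nil_right, List.not_mem_nil, false_iff]
      rintro ⟨q, r, hqr⟩
      have := congrArg List.length hqr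
      simp at this; omega
    | cons y l =>
      rw [traverses_cons_cons, ih]
      constructor
      · rintro (⟨rfl, rfl⟩ | ⟨q, r, hqr⟩)
        · exact ⟨[], l, rfl⟩
        · exact ⟨x :: q, r, by rw [List.cons_append, ← hqr]⟩
      · rintro ⟨q, r, hqr⟩
        cases q with
        | nil => simp at hqr; exact Or.inl ⟨hqr.1, hqr.2.1⟩
        | cons z q' =>
          right
          refine ⟨q', r, ?_⟩
          rw [List.cons_append] at hqr
          exact (List.cons.injEq _ _ _ _ ▸ hqr).2

lemma chain'_em_iff {p : List V} :
    List.Chain' (fun x y => E x y ∧ ¬ (x = a ∧ y = b)) p ↔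
      List.Chain' E p ∧ ¬ Traverses p a b := by
  induction p with
  | nil => simp [Traverses, List.Chain']
  | cons x tl ih =>
    cases tl with
    | nil => simp [Traverses, List.Chain']
    | cons y l =>
      simp only [List.Chain'] at ih ⊢
      rw [List.isChain_cons_cons, List.isChain_cons_cons, ih, traverses_cons_cons]
      tauto

lemma isWalk_em_iff {p : List V} :
    IsWalk (fun x y => E x y ∧ ¬ (x = a ∧ y = b)) s t p ↔
      IsWalk E s t p ∧ ¬ Traverses p a b := by
  unfold IsWalk; rw [chain'_em_iff]; tauto

end Aux


/-- If some, but not all, shortest paths from `v` to `w` travel via the deleted edge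
`(a, b)`, then after the deletion the shortest distance is unchanged and the
shortest-path count decreases by `SPCnt(v,a) · SPCnt(b,w)`. -/
theorem stmt_9 {V : Type*} [Fintype V] (E : V → V → Prop) (hE : ∀ v, ¬ E v v)
    (a b : V) (hab : E a b)
    (Em : V → V → Prop) (hEm : Em = fun x y => E x y ∧ ¬ (x = a ∧ y = b))
    (v w : V) (hvw : Reach E v w) (hva : Reach E v a) (hbw : Reach E b w)
    (hsd : sd E v a + 1 + sd E b w = sd E v w)
    (hcnt : SPCnt E v a * SPCnt E b w < SPCnt E v w) :
    Reach Em v w ∧ sd Em v w = sd E v w ∧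
    SPCnt Em v w = SPCnt E v w - SPCnt E v a * SPCnt E b w := by
  subst hEm
  set d1 := sd E v a with hd1
  set d2 := sd E b w with hd2
  set d := sd E v w with hd
  set S := ShortestPaths E v w with hS
  set T := {p ∈ ShortestPaths E v w | Traverses p a b} with hT
  have hSfin : S.Finite := by
    have := walkSet_finite E v w d
    exact this.subset (fun p hp => hp)
  have hTsub : T ⊆ S := fun p hp => hp.1
  -- every element of T decomposes
  have hdecomp : ∀ p ∈ T, p.take (d1 + 1) ∈ ShortestPaths E v a ∧
      p.drop (d1 + 1) ∈ ShortestPaths E b w := by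
    rintro p ⟨⟨⟨hch, hhd, hlast⟩, hlen⟩, htrav⟩
    obtain ⟨q, r, rfl⟩ := traverses_iff.1 htrav
    have hchain := List.isChain_append_cons_cons.1 hch
    have hwalk1 : IsWalk E v a (q ++ [a]) := by
      refine ⟨hchain.1, ?_, List.getLast?_concat⟩
      rw [List.head?_append] at hhd ⊢
      cases q with
      | nil => simpa using hhd
      | cons z q' => simpa using hhd
    have hwalk2 : IsWalk E b w (b :: r) := by
      refine ⟨hchain.2.2, rfl, ?_⟩
      rw [List.getLast?_append_cons] at hlast
      simpa using hlast
    have hl1 : d1 ≤ q.length := by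
      have := sd_le hwalk1
      simpa [walkLen] using this
    have hl2 : d2 ≤ r.length := by
      have := sd_le hwalk2
      simpa [walkLen] using this
    have hlen' : q.length + r.length + 1 = d := by
      simp [walkLen] at hlen; omega
    have hq : q.length = d1 := by omega
    have hr : r.length = d2 := by omega
    have htake : (q ++ a :: b :: r).take (d1 + 1) = q ++ [a] := by
      rw [← hq]
      rw [List.take_append]
      simp
    have hdrop : (q ++ a :: b :: r).drop (d1 + 1) = b :: r := by
      rw [← hq]
      rw [List.drop_append]
      simp
    rw [htake, hdrop]
    constructor
    · exact ⟨hwalk1, by simp [walkLen, hq, hd1]⟩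
    · exact ⟨hwalk2, by simp [walkLen, hr, hd2]⟩
  -- composition
  have hcomp : ∀ q1 ∈ ShortestPaths E v a, ∀ r1 ∈ ShortestPaths E b w, q1 ++ r1 ∈ T := by
    rintro q1 ⟨⟨hch1, hhd1, hlast1⟩, hlen1⟩ r1 ⟨⟨hch2, hhd2, hlast2⟩, hlen2⟩
    have hq1ne : q1 ≠ [] := by rintro rfl; simp at hhd1
    have hr1ne : r1 ≠ [] := by rintro rfl; simp at hhd2
    have hwalk : IsWalk E v w (q1 ++ r1) := by
      refine ⟨List.isChain_append.2 ⟨hch1, hch2, ?_⟩, ?_, ?_⟩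
      · intro x hx y hy
        rw [hlast1] at hx; rw [hhd2] at hy
        simp at hx hy; rw [← hx, ← hy]; exact hab
      · rw [List.head?_append, hhd1]; rfl
      · rw [List.getLast?_append_of_ne_nil _ hr1ne, hlast2]
    have hlen : walkLen (q1 ++ r1) = d := by
      have e1 : q1.length = d1 + 1 := by
        have := hlen1 ▸ (IsWalk.length_eq ⟨hch1, hhd1, hlast1⟩); omega
      have e2 : r1.length = d2 + 1 := by
        have := hlen2 ▸ (IsWalk.length_eq ⟨hch2, hhd2, hlast2⟩); omega
      simp [walkLen, e1, e2]; omega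
    have htrav : Traverses (q1 ++ r1) a b := by
      obtain ⟨q', rfl⟩ := List.getLast?_eq_some_iff.1 hlast1
      cases r1 with
      | nil => exact absurd rfl hr1ne
      | cons z r' =>
        have hz : z = b := by simpa using hhd2
        subst hz
        exact traverses_iff.2 ⟨q', r', by simp⟩
    exact ⟨⟨hwalk, hlen⟩, htrav⟩
  -- T = image of product
  have hTimg : T = (fun x : List V × List V => x.1 ++ x.2) ''
      (ShortestPaths E v a ×ˢ ShortestPaths E b w) := by
    ext p
    constructor
    · intro hp
      obtain ⟨h1, h2⟩ := hdecomp p hp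
      exact ⟨(p.take (d1 + 1), p.drop (d1 + 1)), ⟨h1, h2⟩, List.take_append_drop _ _⟩
    · rintro ⟨⟨q1, r1⟩, ⟨hq1, hr1⟩, rfl⟩
      exact hcomp q1 hq1 r1 hr1
  have hlen_eq : ∀ q1 ∈ ShortestPaths E v a, q1.length = d1 + 1 := by
    rintro q1 ⟨hw, hlen⟩
    have := hlen ▸ hw.length_eq; omega
  have hinj : Set.InjOn (fun x : List V × List V => x.1 ++ x.2)
      (ShortestPaths E v a ×ˢ ShortestPaths E b w) := by
    rintro ⟨q1, r1⟩ ⟨hq1, hr1⟩ ⟨q2, r2⟩ ⟨hq2, hr2⟩ h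
    simp only at h
    obtain ⟨h1, h2⟩ := List.append_inj h ((hlen_eq q1 hq1).trans (hlen_eq q2 hq2).symm)
    simp [h1, h2]
  have hTcard : T.ncard = SPCnt E v a * SPCnt E b w := by
    rw [hTimg, Set.ncard_image_of_injOn hinj, ← Nat.card_coe_set_eq,
      Nat.card_congr (Equiv.Set.prod _ _), Nat.card_prod,
      Nat.card_coe_set_eq, Nat.card_coe_set_eq]
    rfl
  have hScard : S.ncard = SPCnt E v w := rfl
  have hdiffcard : (S \ T).ncard = SPCnt E v w - SPCnt E v a * SPCnt E b w := by
    rw [Set.ncard_diff hTsub (hSfin.subset hTsub), hTcard, hScard]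
  have hdiffpos : (S \ T).Nonempty := by
    rw [← Set.ncard_pos hSfin.diff]
    rw [hdiffcard]; omega
  obtain ⟨p0, hp0S, hp0T⟩ := hdiffpos
  have hp0walk : IsWalk E v w p0 := hp0S.1
  have hp0trav : ¬ Traverses p0 a b := fun h => hp0T ⟨hp0S, h⟩
  have hp0em : IsWalk (fun x y => E x y ∧ ¬ (x = a ∧ y = b)) v w p0 :=
    isWalk_em_iff.2 ⟨hp0walk, hp0trav⟩
  have hreach : Reach (fun x y => E x y ∧ ¬ (x = a ∧ y = b)) v w := ⟨p0, hp0em⟩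
  have hsdEm : sd (fun x y => E x y ∧ ¬ (x = a ∧ y = b)) v w = d := by
    have hle : sd (fun x y => E x y ∧ ¬ (x = a ∧ y = b)) v w ≤ d := by
      have := sd_le hp0em
      rw [hp0S.2] at this; exact this
    have hge : d ≤ sd (fun x y => E x y ∧ ¬ (x = a ∧ y = b)) v w := by
      obtain ⟨p1, hp1, hp1len⟩ := exists_shortest hreach
      have := sd_le (isWalk_em_iff.1 hp1).1
      rw [hp1len] at this; exact this
    omega
  refine ⟨hreach, hsdEm, ?_⟩
  have hSPeq : ShortestPaths (fun x y => E x y ∧ ¬ (x = a ∧ y = b)) v w = S \ T := by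
    ext p
    simp only [hS, hT, ShortestPaths, Set.mem_diff, Set.mem_setOf_eq, hsdEm, isWalk_em_iff, ← hd]
    tauto
  rw [SPCnt, hSPeq, hdiffcard]
end

section
/- Let G be a directed graph and G_b its bipartite conversion. For all distinct vertices u, v of G: a path from u^o to v^i exists in G_b if and only if a path from u to v exists in G, and in that case sd_{G_b}(u^o, v^i) = 2 · sd_G(u,v) − 1 and SPCnt_{G_b}(u^o, v^i) = SPCnt_G(u,v). That is, the bipartite conversion doubles all distances (shortest u→v paths of length d in G correspond bijectively to shortest u^o→v^i paths of length 2d − 1 in G_b) and preserves shortest-path counts. -/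
open Classical

/-- The bipartite conversion of the edge relation `E`: each vertex `v` is split into
an incoming copy `vⁱ = Sum.inl v` and an outgoing copy `vᵒ = Sum.inr v`; there is an
edge `vⁱ → vᵒ` for every vertex `v`, and an edge `vᵒ → wⁱ` for every edge `(v, w)` of `E`. -/
def BipE {V : Type*} (E : V → V → Prop) : (V ⊕ V) → (V ⊕ V) → Prop
  | Sum.inl v, Sum.inr w => v = w
  | Sum.inr v, Sum.inl w => E v w
  | _, _ => False

def enc {V : Type*} : List V → List (V ⊕ V)
  | [] => []
  | [_] => []
  | a :: b :: l => Sum.inr a :: Sum.inl b :: enc (b :: l)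

lemma enc_cons {V : Type*} (a b : V) (l : List V) :
    enc (a :: b :: l) = Sum.inr a :: Sum.inl b :: enc (b :: l) := by
  cases l <;> rfl

lemma enc_length {V : Type*} : ∀ (l : List V) (a b : V),
    (enc (a :: b :: l)).length = 2 * (b :: l).length := by
  intro l
  induction l with
  | nil => intro a b; rfl
  | cons c l ih =>
    intro a b
    rw [enc_cons]
    simp only [List.length_cons]
    rw [ih b c]
    simp [List.length_cons]; ring

lemma enc_last {V : Type*} : ∀ (l : List V) (a b : V),
    (enc (a :: b :: l)).getLast? = ((b :: l).getLast?).map Sum.inl := by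
  intro l
  induction l with
  | nil => intro a b; rfl
  | cons c l ih =>
    intro a b
    rw [enc_cons, enc_cons]
    rw [List.getLast?_cons_cons, List.getLast?_cons_cons, ← enc_cons, ih b c,
      List.getLast?_cons_cons]

lemma enc_chain {V : Type*} {E : V → V → Prop} : ∀ (l : List V) (a b : V),
    List.Chain' E (a :: b :: l) → List.Chain' (BipE E) (enc (a :: b :: l)) := by
  intro l
  induction l with
  | nil =>
    intro a b h
    unfold List.Chain' at h
    rw [List.isChain_cons_cons] at h
    show List.Chain' (BipE E) [Sum.inr a, Sum.inl b]
    simp [List.Chain', List.isChain_cons_cons, BipE, h.1]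
  | cons c l ih =>
    intro a b h
    unfold List.Chain' at h
    rw [List.isChain_cons_cons] at h
    rw [enc_cons, enc_cons]
    unfold List.Chain'
    rw [List.isChain_cons_cons, List.isChain_cons_cons, ← enc_cons]
    exact ⟨h.1, rfl, ih b c h.2⟩

lemma enc_inj {V : Type*} : ∀ (l : List V) (a b : V) (l' : List V) (a' b' : V),
    enc (a :: b :: l) = enc (a' :: b' :: l') → a :: b :: l = a' :: b' :: l' := by
  intro l
  induction l with
  | nil =>
    intro a b l' a' b' h
    cases l' with
    | nil =>
      rw [enc_cons, enc_cons] at h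
      simp_all
    | cons c' l'' =>
      rw [enc_cons, enc_cons, enc_cons] at h
      simp [enc] at h
  | cons c l ih =>
    intro a b l' a' b' h
    cases l' with
    | nil =>
      rw [enc_cons, enc_cons, enc_cons] at h
      simp [enc] at h
    | cons c' l'' =>
      rw [enc_cons, enc_cons] at h
      injection h with h1 h
      injection h with h2 h3
      injection h1 with h1
      injection h2 with h2
      subst h1; subst h2
      have := ih b c _ b c' h3
      simp_all

lemma walk_shape {V : Type*} {E : V → V → Prop} {u v : V} {p : List V}
    (h : IsWalk E u v p) (huv : u ≠ v) : ∃ b l, p = u :: b :: l := by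
  obtain ⟨hc, hh, hl⟩ := h
  match p with
  | [] => simp at hh
  | [a] =>
    simp only [List.head?_cons, Option.some.injEq] at hh
    simp only [List.getLast?_singleton, Option.some.injEq] at hl
    exact absurd (hh ▸ hl) huv
  | a :: b :: l =>
    simp only [List.head?_cons, Option.some.injEq] at hh
    exact ⟨b, l, by rw [hh]⟩

lemma enc_walk {V : Type*} {E : V → V → Prop} {u v : V} {p : List V}
    (h : IsWalk E u v p) (huv : u ≠ v) :
    IsWalk (BipE E) (Sum.inr u) (Sum.inl v) (enc p) ∧
      walkLen (enc p) = 2 * walkLen p - 1 ∧ 1 ≤ walkLen p := by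
  obtain ⟨b, l, rfl⟩ := walk_shape h huv
  obtain ⟨hc, hh, hl⟩ := h
  rw [List.getLast?_cons_cons] at hl
  refine ⟨⟨enc_chain l u b hc, by rw [enc_cons]; rfl, ?_⟩, ?_, ?_⟩
  · rw [enc_last, hl]; rfl
  · unfold walkLen
    rw [enc_length]
    simp only [List.length_cons]
    omega
  · unfold walkLen; simp

lemma dec {V : Type*} {E : V → V → Prop} :
    ∀ (n : ℕ) (q : List (V ⊕ V)), q.length ≤ n → ∀ (u v : V),
      IsWalk (BipE E) (Sum.inr u) (Sum.inl v) q →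
      ∃ p, IsWalk E u v p ∧ enc p = q := by
  intro n
  induction n with
  | zero =>
    intro q hq u v ⟨_, hh, _⟩
    have : q = [] := List.length_eq_zero_iff.mp (Nat.le_zero.mp hq)
    subst this; simp at hh
  | succ n ih =>
    intro q hq u v ⟨hc, hh, hl⟩
    cases q with
    | nil => simp at hh
    | cons x t =>
    simp only [List.head?_cons, Option.some.injEq] at hh
    subst hh
    cases t with
    | nil =>
      simp only [List.getLast?_singleton, Option.some.injEq] at hl
      exact absurd hl (by simp)
    | cons y t' =>
    unfold List.Chain' at hc
    rw [List.isChain_cons_cons] at hc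
    cases y with
    | inr w => exact absurd hc.1 (by simp [BipE])
    | inl w =>
    have hEuw : E u w := hc.1
    cases t' with
    | nil =>
      rw [List.getLast?_cons_cons, List.getLast?_singleton] at hl
      simp only [Option.some.injEq, Sum.inl.injEq] at hl
      refine ⟨[u, v], ⟨?_, rfl, rfl⟩, ?_⟩
      · simpa [List.Chain', List.isChain_cons_cons, hl] using hEuw
      · rw [show enc [u, v] = [Sum.inr u, Sum.inl v] from rfl, hl]
    | cons z t'' =>
    have hc2 := hc.2
    rw [List.isChain_cons_cons] at hc2
    cases z with
    | inl w' => exact absurd hc2.1 (by simp [BipE])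
    | inr w' =>
    have hww : w = w' := hc2.1
    subst hww
    have hwalk : IsWalk (BipE E) (Sum.inr w) (Sum.inl v) (Sum.inr w :: t'') := by
      refine ⟨hc2.2, rfl, ?_⟩
      rw [List.getLast?_cons_cons, List.getLast?_cons_cons] at hl
      exact hl
    have hlen : (Sum.inr w :: t'').length ≤ n := by
      simp only [List.length_cons] at hq ⊢; omega
    obtain ⟨p', hp', henc⟩ := ih _ hlen w v hwalk
    cases p' with
    | nil => simp [enc] at henc
    | cons a rest =>
    have ha : a = w := by
      have := hp'.2.1
      simpa using this
    subst ha
    cases rest with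
    | nil => simp [enc] at henc
    | cons b l =>
    refine ⟨u :: a :: b :: l, ⟨?_, rfl, ?_⟩, ?_⟩
    · unfold List.Chain'
      rw [List.isChain_cons_cons]
      exact ⟨hEuw, hp'.1⟩
    · rw [List.getLast?_cons_cons]
      exact hp'.2.2
    · rw [enc_cons, henc]

/-- The bipartite conversion preserves reachability between `uᵒ` and `vⁱ`,
doubles all shortest distances (`sd(uᵒ, vⁱ) = 2·sd(u,v) − 1`), and preserves
shortest-path counts. -/
theorem stmt_10 {V : Type*} [Fintype V] (E : V → V → Prop) (hE : ∀ v, ¬ E v v)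
    (u v : V) (huv : u ≠ v) :
    (Reach (BipE E) (Sum.inr u) (Sum.inl v) ↔ Reach E u v) ∧
    (Reach E u v →
      sd (BipE E) (Sum.inr u) (Sum.inl v) = 2 * sd E u v - 1 ∧
      SPCnt (BipE E) (Sum.inr u) (Sum.inl v) = SPCnt E u v) := by
  have hfor : Reach E u v → Reach (BipE E) (Sum.inr u) (Sum.inl v) := by
    rintro ⟨p, hp⟩; exact ⟨enc p, (enc_walk hp huv).1⟩
  have hback : Reach (BipE E) (Sum.inr u) (Sum.inl v) → Reach E u v := by
    rintro ⟨q, hq⟩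
    obtain ⟨p, hp, -⟩ := dec q.length q le_rfl u v hq
    exact ⟨p, hp⟩
  refine ⟨⟨hback, hfor⟩, fun hr => ?_⟩
  set d := sd E u v with hd
  have hdS : d ∈ {n | ∃ p, IsWalk E u v p ∧ walkLen p = n} := by
    apply Nat.sInf_mem
    obtain ⟨p, hp⟩ := hr
    exact ⟨walkLen p, p, hp, rfl⟩
  obtain ⟨p0, hp0, hp0len⟩ := hdS
  have hd1 : 1 ≤ d := hp0len ▸ (enc_walk hp0 huv).2.2
  have hsd : sd (BipE E) (Sum.inr u) (Sum.inl v) = 2 * d - 1 := by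
    unfold sd
    apply le_antisymm
    · exact Nat.sInf_le ⟨enc p0, (enc_walk hp0 huv).1,
        by rw [(enc_walk hp0 huv).2.1, hp0len]⟩
    · refine le_csInf ⟨walkLen (enc p0), enc p0, (enc_walk hp0 huv).1, rfl⟩ ?_
      rintro n ⟨q, hq, rfl⟩
      obtain ⟨p, hp, rfl⟩ := dec q.length q le_rfl u v hq
      have h2 := enc_walk hp huv
      rw [h2.2.1]
      have hdle : d ≤ walkLen p := Nat.sInf_le ⟨p, hp, rfl⟩
      omega
  refine ⟨hsd, ?_⟩
  have hset : ShortestPaths (BipE E) (Sum.inr u) (Sum.inl v) = enc '' ShortestPaths E u v := by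
    ext q
    constructor
    · rintro ⟨hq, hqlen⟩
      obtain ⟨p, hp, rfl⟩ := dec _ _ le_rfl u v hq
      have h2 := enc_walk hp huv
      refine ⟨p, ⟨hp, ?_⟩, rfl⟩
      rw [hsd, h2.2.1] at hqlen
      have h3 := h2.2.2
      have hdle : d ≤ walkLen p := Nat.sInf_le ⟨p, hp, rfl⟩
      show walkLen p = d
      omega
    · rintro ⟨p, ⟨hp, hplen⟩, rfl⟩
      have h2 := enc_walk hp huv
      exact ⟨h2.1, by rw [h2.2.1, hplen, hsd]⟩
  rw [SPCnt, SPCnt, hset]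
  apply Set.ncard_image_of_injOn
  rintro p1 ⟨hp1, -⟩ p2 ⟨hp2, -⟩ henc
  obtain ⟨b1, l1, rfl⟩ := walk_shape hp1 huv
  obtain ⟨b2, l2, rfl⟩ := walk_shape hp2 huv
  exact enc_inj _ _ _ _ _ _ henc
end

section
/- Let G be a directed graph, v a vertex of G, and G_b the bipartite conversion of G. Then a cycle through v exists in G if and only if a path from v^o to v^i exists in G_b, and in that case the length of a shortest cycle through v equals (sd_{G_b}(v^o, v^i) + 1)/2 and SCCnt_G(v) = SPCnt_{G_b}(v^o, v^i). That is, counting the shortest cycles through v in G corresponds exactly to counting the shortest paths from v^o to v^i in G_b. -/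
open Classical

/-- `p` is a cycle through `v`: a path `v = v₀, v₁, …, v_k = v` of length `k ≥ 2`
in which `v₀, …, v_{k-1}` are pairwise distinct. -/
def IsCycleThrough {V : Type*} (E : V → V → Prop) (v : V) (p : List V) : Prop :=
  IsWalk E v v p ∧ 3 ≤ p.length ∧ p.dropLast.Nodup

/-- The length of a shortest cycle through `v`. -/
noncomputable def scd {V : Type*} (E : V → V → Prop) (v : V) : ℕ :=
  sInf {n | ∃ p, IsCycleThrough E v p ∧ walkLen p = n}

/-- The number of shortest cycles through `v`. -/
noncomputable def SCCnt {V : Type*} (E : V → V → Prop) (v : V) : ℕ :=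
  {p | IsCycleThrough E v p ∧ walkLen p = scd E v}.ncard

namespace Stmt11Aux

variable {V : Type*}

def closedSet (E : V → V → Prop) (v : V) : Set ℕ :=
  {n | ∃ p, (IsWalk E v v p ∧ 2 ≤ p.length) ∧ walkLen p = n}

def bipList : List V → List (V ⊕ V)
  | [] => []
  | [_] => []
  | a :: b :: l => Sum.inr a :: Sum.inl b :: bipList (b :: l)

lemma bipList_length : ∀ p : List V, (bipList p).length = 2 * (p.length - 1)
  | [] => rfl
  | [_] => rfl
  | a :: b :: l => by
    show (Sum.inr a :: Sum.inl b :: bipList (b :: l)).length = _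
    simp only [List.length_cons, bipList_length (b :: l)]
    omega

lemma bipList_getLast? : ∀ (l : List V) (a b : V),
    (bipList (a :: b :: l)).getLast? = ((b :: l).getLast?).map Sum.inl
  | [], _, _ => rfl
  | c :: l, a, b => by
    have ih := bipList_getLast? l b c
    show (Sum.inr a :: Sum.inl b :: bipList (b :: c :: l)).getLast? = _
    rw [List.getLast?_cons_cons]
    show (Sum.inl b :: Sum.inr b :: Sum.inl c :: bipList (c :: l)).getLast? = _
    rw [List.getLast?_cons_cons]
    show (bipList (b :: c :: l)).getLast? = _
    rw [ih, List.getLast?_cons_cons]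

lemma chain'_bipList {E : V → V → Prop} : ∀ {p : List V}, p.Chain' E →
    (bipList p).Chain' (BipE E)
  | [], _ => List.isChain_nil
  | [_], _ => List.isChain_nil
  | a :: b :: l, h => by
    rw [List.Chain', List.isChain_cons_cons] at h
    show List.Chain' (BipE E) (Sum.inr a :: Sum.inl b :: bipList (b :: l))
    rw [List.Chain', List.isChain_cons_cons]
    refine ⟨h.1, ?_⟩
    rw [List.isChain_cons]
    refine ⟨?_, chain'_bipList h.2⟩
    intro y hy
    cases l with
    | nil => simp [bipList] at hy
    | cons c l =>
      rw [show bipList (b :: c :: l) = Sum.inr b :: Sum.inl c :: bipList (c :: l) from rfl] at hy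
      simp at hy
      subst hy
      exact rfl

lemma isWalk_bipList {E : V → V → Prop} {s t : V} {p : List V} (hp : IsWalk E s t p)
    (hlen : 2 ≤ p.length) : IsWalk (BipE E) (Sum.inr s) (Sum.inl t) (bipList p) := by
  obtain ⟨hc, hh, hl⟩ := hp
  match p, hlen with
  | a :: b :: l, _ =>
    have ha : a = s := by simpa using hh
    subst ha
    refine ⟨chain'_bipList hc, rfl, ?_⟩
    rw [List.getLast?_cons_cons] at hl
    rw [bipList_getLast?, hl]
    rfl

lemma exists_of_bipWalk {E : V → V → Prop} : ∀ (n : ℕ) (q : List (V ⊕ V)) (s t : V),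
    q.length ≤ n → IsWalk (BipE E) (Sum.inr s) (Sum.inl t) q →
    ∃ p, IsWalk E s t p ∧ 2 ≤ p.length ∧ bipList p = q := by
  intro n
  induction n with
  | zero =>
    intro q s t hle h
    have : q = [] := List.length_eq_zero_iff.mp (Nat.le_zero.mp hle)
    subst this
    simp [IsWalk] at h
  | succ n ih =>
    intro q s t hle h
    obtain ⟨hc, hh, hl⟩ := h
    match q with
    | [] => simp at hh
    | x :: q₁ =>
      have hx : x = Sum.inr s := by simpa using hh
      subst hx
      match q₁ with
      | [] => simp [List.getLast?] at hl
      | y :: q₂ =>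
        rw [List.Chain', List.isChain_cons_cons] at hc
        obtain ⟨hxy, hc⟩ := hc
        match y with
        | Sum.inr w => exact hxy.elim
        | Sum.inl w =>
          match q₂ with
          | [] =>
            have hw : w = t := by
              rw [List.getLast?_cons_cons] at hl
              simpa [List.getLast?] using hl
            refine ⟨[s, w], ⟨List.isChain_pair.mpr hxy, rfl, ?_⟩, by simp, rfl⟩
            rw [List.getLast?_cons_cons]
            simp [List.getLast?, hw]
          | z :: q₃ =>
            rw [List.isChain_cons_cons] at hc
            obtain ⟨hyz, hc⟩ := hc
            match z with
            | Sum.inl u => exact hyz.elim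
            | Sum.inr u =>
              have hu : u = w := hyz.symm
              have h2 : IsWalk (BipE E) (Sum.inr u) (Sum.inl t) (Sum.inr u :: q₃) := by
                refine ⟨hc, rfl, ?_⟩
                rw [List.getLast?_cons_cons, List.getLast?_cons_cons] at hl
                exact hl
              have hlen2 : (Sum.inr u :: q₃).length ≤ n := by
                simp only [List.length_cons] at hle ⊢; omega
              obtain ⟨p₂, hp₂, hp₂len, hbip⟩ := ih _ u t hlen2 h2
              match p₂, hp₂len with
              | a :: b :: l, _ =>
                have ha : a = u := by simpa using hp₂.2.1
                refine ⟨s :: a :: b :: l, ⟨?_, rfl, ?_⟩, by simp, ?_⟩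
                · rw [List.Chain', List.isChain_cons_cons]
                  refine ⟨?_, hp₂.1⟩
                  rw [ha, hu]; exact hxy
                · rw [List.getLast?_cons_cons]; exact hp₂.2.2
                · show Sum.inr s :: Sum.inl a :: bipList (a :: b :: l) = _
                  rw [hbip, ha, hu]

lemma bipList_inj : ∀ (p p' : List V), 2 ≤ p.length → 2 ≤ p'.length →
    bipList p = bipList p' → p = p' := by
  intro p
  induction p with
  | nil => intro p' h; simp at h
  | cons a p ih =>
    intro p' hp hp' heq
    cases p with
    | nil => simp at hp
    | cons b l =>
      cases p' with
      | nil => simp at hp'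
      | cons a' p'' =>
        cases p'' with
        | nil => simp at hp'
        | cons b' l' =>
          rw [show bipList (a :: b :: l) = Sum.inr a :: Sum.inl b :: bipList (b :: l) from rfl,
            show bipList (a' :: b' :: l') = Sum.inr a' :: Sum.inl b' :: bipList (b' :: l') from rfl]
            at heq
          simp only [List.cons.injEq, Sum.inr.injEq, Sum.inl.injEq] at heq
          obtain ⟨h1, h2, h3⟩ := heq
          subst h1; subst h2
          cases l with
          | nil =>
            cases l' with
            | nil => rfl
            | cons c l'' =>
              rw [show bipList (b :: c :: l'') = Sum.inr b :: Sum.inl c :: bipList (c :: l'')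
                from rfl] at h3
              simp [bipList] at h3
          | cons c l'' =>
            cases l' with
            | nil =>
              rw [show bipList (b :: c :: l'') = Sum.inr b :: Sum.inl c :: bipList (c :: l'')
                from rfl] at h3
              simp [bipList] at h3
            | cons c' l''' =>
              have := ih (b :: c' :: l''') (by simp) (by simp) h3
              rw [this]

lemma min_closed_is_cycle {E : V → V → Prop} (hE : ∀ x, ¬ E x x) {v : V} {p : List V}
    (hp : IsWalk E v v p) (hlen : 2 ≤ p.length)
    (hmin : ∀ p', IsWalk E v v p' → 2 ≤ p'.length → walkLen p ≤ walkLen p') :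
    IsCycleThrough E v p := by
  obtain ⟨hc, hh, hl⟩ := hp
  refine ⟨⟨hc, hh, hl⟩, ?_, ?_⟩
  · by_contra h
    push_neg at h
    have h2 : p.length = 2 := by omega
    match p, h2 with
    | [a, b], _ =>
      have ha : a = v := by simpa using hh
      have hb : b = v := by simpa [List.getLast?] using hl
      have hab := List.isChain_pair.mp hc
      rw [ha, hb] at hab
      exact hE v hab
  · by_contra hnd
    rw [List.Nodup, List.pairwise_iff_getElem] at hnd
    push_neg at hnd
    obtain ⟨i, j, hi, hj, hij, heq⟩ := hnd
    rw [List.length_dropLast] at hi hj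
    rw [List.getElem_dropLast, List.getElem_dropLast] at heq
    have hpl : 2 ≤ p.length := hlen
    set p' := p.take (i + 1) ++ p.drop (j + 1) with hp'def
    have hlt : (p.take (i + 1)).length = i + 1 := by
      rw [List.length_take]; omega
    have hld : (p.drop (j + 1)).length = p.length - (j + 1) := List.length_drop
    have hplen : p'.length = (i + 1) + (p.length - (j + 1)) := by
      rw [hp'def, List.length_append, hlt, hld]
    have h2p' : 2 ≤ p'.length := by omega
    have hwalk : IsWalk E v v p' := by
      refine ⟨?_, ?_, ?_⟩
      · rw [hp'def, List.Chain', List.isChain_append]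
        refine ⟨hc.take _, hc.drop _, ?_⟩
        intro x hx y hy
        have hx' : x = p[i] := by
          rw [List.getLast?_eq_getElem?, hlt, Nat.add_sub_cancel, List.getElem?_take] at hx
          simp only [Nat.lt_succ_self, if_true] at hx
          obtain ⟨_, hxe⟩ := List.getElem?_eq_some_iff.mp hx
          exact hxe.symm
        have hy' : y = p[j + 1] := by
          rw [List.head?_drop] at hy
          obtain ⟨_, hye⟩ := List.getElem?_eq_some_iff.mp hy
          exact hye.symm
        subst hx'; subst hy'
        rw [heq]
        have := List.isChain_iff_getElem.mp hc j (by omega)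
        simpa using this
      · rw [hp'def, List.head?_append, List.head?_take]
        simp only [Nat.succ_ne_zero, if_false]
        rw [hh]; rfl
      · rw [hp'def, List.getLast?_append_of_ne_nil]
        · rw [List.getLast?_eq_getElem?, hld]
          rw [List.getElem?_drop]
          rw [List.getLast?_eq_getElem?] at hl
          rw [show j + 1 + (p.length - (j + 1) - 1) = p.length - 1 by omega]
          exact hl
        · apply List.ne_nil_of_length_pos
          omega
    have := hmin p' hwalk h2p'
    unfold walkLen at this
    omega

end Stmt11Aux

open Stmt11Aux in
/-- A cycle through `v` exists in `G` iff a path from `vᵒ` to `vⁱ` exists in the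
bipartite conversion `G_b`; in that case the shortest cycle length through `v`
equals `(sd_{G_b}(vᵒ, vⁱ) + 1) / 2` and `SCCnt_G(v) = SPCnt_{G_b}(vᵒ, vⁱ)`. -/
theorem stmt_11 {V : Type*} [Fintype V] (E : V → V → Prop) (hE : ∀ v, ¬ E v v) (v : V) :
    ((∃ p, IsCycleThrough E v p) ↔ Reach (BipE E) (Sum.inr v) (Sum.inl v)) ∧
    ((∃ p, IsCycleThrough E v p) →
      scd E v = (sd (BipE E) (Sum.inr v) (Sum.inl v) + 1) / 2 ∧
      SCCnt E v = SPCnt (BipE E) (Sum.inr v) (Sum.inl v)) := by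
  classical
  have key : ∀ q, IsWalk (BipE E) (Sum.inr v) (Sum.inl v) q ↔
      ∃ p, IsWalk E v v p ∧ 2 ≤ p.length ∧ bipList p = q := by
    intro q
    constructor
    · intro h
      exact exists_of_bipWalk q.length q v v le_rfl h
    · rintro ⟨p, h1, h2, rfl⟩
      exact isWalk_bipList h1 h2
  have walkLen_bip : ∀ p : List V, 2 ≤ p.length → walkLen (bipList p) = 2 * walkLen p - 1 := by
    intro p hp
    unfold walkLen
    rw [bipList_length]
  have hcyc_of_closed : (∃ p, IsWalk E v v p ∧ 2 ≤ p.length) →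
      ∃ p, IsCycleThrough E v p ∧ walkLen p = sInf (closedSet E v) := by
    rintro ⟨p₀, hp₀⟩
    have hSne : (closedSet E v).Nonempty := ⟨walkLen p₀, p₀, hp₀, rfl⟩
    obtain ⟨p, hp, hplen⟩ := Nat.sInf_mem hSne
    have hmin : ∀ p', IsWalk E v v p' → 2 ≤ p'.length → walkLen p ≤ walkLen p' := by
      intro p' h1 h2
      rw [hplen]
      exact Nat.sInf_le ⟨p', ⟨h1, h2⟩, rfl⟩
    exact ⟨p, min_closed_is_cycle hE hp.1 hp.2 hmin, hplen⟩
  have hsub : ∀ p, IsCycleThrough E v p → IsWalk E v v p ∧ 2 ≤ p.length := by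
    intro p h
    exact ⟨h.1, by have := h.2.1; omega⟩
  constructor
  · constructor
    · rintro ⟨p, hp⟩
      exact ⟨bipList p, isWalk_bipList hp.1 (hsub p hp).2⟩
    · rintro ⟨q, hq⟩
      obtain ⟨p, h1, h2, _⟩ := (key q).mp hq
      obtain ⟨p', hp', _⟩ := hcyc_of_closed ⟨p, h1, h2⟩
      exact ⟨p', hp'⟩
  · rintro ⟨pc, hpc⟩
    obtain ⟨pm, hpm_cyc, hpm_len⟩ := hcyc_of_closed ⟨pc, hsub pc hpc⟩
    have hCne : {n | ∃ p, IsCycleThrough E v p ∧ walkLen p = n}.Nonempty :=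
      ⟨walkLen pc, pc, hpc, rfl⟩
    have hscd : scd E v = sInf (closedSet E v) := by
      unfold scd
      apply le_antisymm
      · exact Nat.sInf_le ⟨pm, hpm_cyc, hpm_len⟩
      · obtain ⟨p₀, hp₀, hp₀l⟩ := Nat.sInf_mem hCne
        rw [← hp₀l]
        exact Nat.sInf_le ⟨p₀, hsub p₀ hp₀, rfl⟩
    have hm1 : 1 ≤ sInf (closedSet E v) := by
      have h3 := hpm_cyc.2.1
      rw [← hpm_len]
      unfold walkLen
      omega
    have hsd : sd (BipE E) (Sum.inr v) (Sum.inl v) = 2 * sInf (closedSet E v) - 1 := by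
      unfold sd
      apply le_antisymm
      · apply Nat.sInf_le
        refine ⟨bipList pm, isWalk_bipList hpm_cyc.1 (hsub pm hpm_cyc).2, ?_⟩
        rw [walkLen_bip pm (hsub pm hpm_cyc).2, hpm_len]
      · refine le_csInf ⟨2 * sInf (closedSet E v) - 1,
          bipList pm, isWalk_bipList hpm_cyc.1 (hsub pm hpm_cyc).2, ?_⟩ ?_
        · rw [walkLen_bip pm (hsub pm hpm_cyc).2, hpm_len]
        · rintro n ⟨q, hq, rfl⟩
          obtain ⟨p, h1, h2, rfl⟩ := (key q).mp hq
          have hle : sInf (closedSet E v) ≤ walkLen p := Nat.sInf_le ⟨p, ⟨h1, h2⟩, rfl⟩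
          rw [walkLen_bip p h2]
          omega
    refine ⟨by rw [hscd, hsd]; omega, ?_⟩
    have hsets : ShortestPaths (BipE E) (Sum.inr v) (Sum.inl v) =
        bipList '' {p | IsCycleThrough E v p ∧ walkLen p = scd E v} := by
      ext q
      simp only [ShortestPaths, Set.mem_setOf_eq, Set.mem_image]
      constructor
      · rintro ⟨hq, hqlen⟩
        obtain ⟨p, hpw, hp2, rfl⟩ := (key q).mp hq
        have hlq := walkLen_bip p hp2
        have hwp1 : 1 ≤ walkLen p := by unfold walkLen; omega
        rw [hsd] at hqlen
        have hpm' : walkLen p = sInf (closedSet E v) := by omega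
        have hcycp : IsCycleThrough E v p := by
          apply min_closed_is_cycle hE hpw hp2
          intro p' h1' h2'
          rw [hpm']
          exact Nat.sInf_le ⟨p', ⟨h1', h2'⟩, rfl⟩
        exact ⟨p, ⟨hcycp, hpm'.trans hscd.symm⟩, rfl⟩
      · rintro ⟨p, ⟨hpcyc, hplen⟩, rfl⟩
        refine ⟨(key _).mpr ⟨p, hpcyc.1, (hsub p hpcyc).2, rfl⟩, ?_⟩
        rw [walkLen_bip p (hsub p hpcyc).2, hplen, hscd, hsd]
    have hinj : Set.InjOn bipList {p | IsCycleThrough E v p ∧ walkLen p = scd E v} := by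
      intro p hp p' hp' h
      exact bipList_inj p p' (hsub p hp.1).2 (hsub p' hp'.1).2 h
    unfold SCCnt SPCnt
    rw [hsets, Set.ncard_image_of_injOn hinj]
end
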